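/- arXiv:2201.04242 — 3 statements merged into one kernel-verified Lean document; each statement's English description precedes it below -/
import Mathlib

section
/- Let (X_1, …, X_n) be a centered Gaussian random vector such that E[X_i X_j] ≥ 0 for all i ≠ j, and let m_1, …, m_n be positive integers. Then for every 1 ≤ k ≤ n−1, E[∏_{j=1}^{n} X_j^{2m_j}] ≥ E[∏_{j=1}^{k} X_j^{2m_j}] · E[∏_{j=k+1}^{n} X_j^{2m_j}]. -/
/-!
Comparing coefficients in the identity `E[(∑ aᵢ Xᵢ)^{2M}] = (2M-1)‼ (∑ Σᵢⱼ aᵢ aⱼ)^M` of polynomials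
in `a` gives `E[∏ Xᵢ^{cᵢ}] · 2^M M! = (∏ cᵢ!) · [a^c] Q^M` for the quadratic form `Q` of the
covariance matrix `Σ`. If `Σ ≥ 0` entrywise, `Q = Q₁ + Q₂ + Q₁₂` splits into the forms of the two
diagonal blocks and the cross terms, all with nonnegative coefficients, so
`[a^{c₁+c₂}] Q^{M₁+M₂} ≥ (M₁+M₂ choose M₁) [a^{c₁}] Q₁^{M₁} [a^{c₂}] Q₂^{M₂}`, and the binomial
coefficient is exactly what the normalising factorials require. The block moments are computed in
the family where the other block is replaced by `0`, whose form is `Q₁` (resp. `Q₂`).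
-/

open MeasureTheory ProbabilityTheory Finset
open scoped NNReal

/-- A centered (jointly) Gaussian random vector: every real-linear combination of the
components is a centered Gaussian random variable, and each component is non-degenerate. -/
def IsCenteredGaussianVec {Ω : Type*} [MeasureSpace Ω] {n : ℕ}
    (X : Fin n → Ω → ℝ) : Prop :=
  (∀ i, Measurable (X i)) ∧
  (∀ a : Fin n → ℝ, ∃ v : ℝ≥0,
      Measure.map (fun ω => ∑ i, a i * X i ω) ℙ = gaussianReal 0 v) ∧
  (∀ i, ∃ v : ℝ≥0, 0 < v ∧ Measure.map (X i) ℙ = gaussianReal 0 v)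

open Real MvPolynomial
open scoped ENNReal Nat

lemma Nat.doubleFactorial_two_mul_sub_one_mul (M : ℕ) :
    (2 * M - 1)‼ * (2 ^ M * M !) = (2 * M)! := by
  rcases M with _ | M
  · rfl
  · rw [← Nat.doubleFactorial_two_mul, show 2 * (M + 1) = 2 * M + 1 + 1 by ring,
      Nat.factorial_eq_mul_doubleFactorial]
    simp [mul_comm]

lemma Nat.two_pow_add_mul_factorial_add (M₁ M₂ : ℕ) :
    2 ^ (M₁ + M₂) * (M₁ + M₂)! = (M₁ + M₂).choose M₁ * ((2 ^ M₁ * M₁ !) * (2 ^ M₂ * M₂ !)) := by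
  rw [add_comm M₁ M₂, ← Nat.add_choose_mul_factorial_mul_factorial M₂ M₁, pow_add]
  ring

theorem integral_pow_two_mul_gaussianReal (v : ℝ≥0) (M : ℕ) :
    ∫ x, x ^ (2 * M) ∂gaussianReal 0 v = (2 * M - 1)‼ * (v : ℝ) ^ M := by
  rcases eq_or_ne v 0 with rfl | hv
  · rcases M with _ | M <;> simp
  have hv' : (0 : ℝ) < 2 * v := by positivity
  have hdensity : ∀ x : ℝ, gaussianPDFReal 0 v x • x ^ (2 * M) = (√(2 * π * v))⁻¹ *
      (|x| ^ ((2 * M : ℕ) : ℝ) * rexp (-(2 * (v : ℝ))⁻¹ * |x| ^ (2 : ℝ))) := by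
    intro x
    rw [gaussianPDFReal_def, smul_eq_mul, Real.rpow_natCast, Real.rpow_two, sq_abs,
      Even.pow_abs (by simp [parity_simps])]
    simp only [sub_zero, div_eq_inv_mul, neg_mul, mul_neg]
    ring
  rw [integral_gaussianReal_eq_integral_smul hv]
  simp_rw [hdensity]
  rw [integral_comp_abs (f := fun y => (√(2 * π * v))⁻¹ *
      (y ^ ((2 * M : ℕ) : ℝ) * rexp (-(2 * (v : ℝ))⁻¹ * y ^ (2 : ℝ)))),
    integral_const_mul, integral_rpow_mul_exp_neg_mul_rpow two_pos
      (by linarith [(2 * M : ℕ).cast_nonneg (α := ℝ)]) (inv_pos.2 hv')]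
  have hexp : -((2 * M : ℕ) + 1 : ℝ) / 2 = -(M + 1 / 2) := by push_cast; ring
  have hΓ : ((2 * M : ℕ) + 1 : ℝ) / 2 = M + 1 / 2 := by push_cast; ring
  rw [hΓ, Real.Gamma_nat_add_half, hexp, Real.rpow_neg (inv_pos.2 hv').le, Real.inv_rpow hv'.le,
    inv_inv, Real.rpow_add hv', Real.rpow_natCast, ← Real.sqrt_eq_rpow,
    show 2 * π * v = 2 * v * π by ring, Real.sqrt_mul hv'.le, mul_pow]
  have : 0 < √(2 * (v : ℝ)) := Real.sqrt_pos.2 hv'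
  have : 0 < √π := Real.sqrt_pos.2 Real.pi_pos
  field_simp

lemma Finset.prod_ite_zero_pow {ι M : Type*} [CommMonoidWithZero M] (s : Finset ι)
    (p : ι → Prop) [DecidablePred p] (f : ι → M) {c : ι → ℕ} (hc : ∀ i, ¬ p i → c i = 0) :
    ∏ i ∈ s, (if p i then f i else 0) ^ c i = ∏ i ∈ s, f i ^ c i :=
  prod_congr rfl fun i _ => by
    by_cases h : p i <;> simp [h, hc]

namespace MvPolynomial

section Quadratic

variable {σ R : Type*} [CommSemiring R] [Fintype σ]

noncomputable def quadraticPoly (A : σ → σ → R) : MvPolynomial σ R :=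
  ∑ i, ∑ j, C (A i j) * X i * X j

lemma quadraticPoly_add (A B : σ → σ → R) :
    quadraticPoly (A + B) = quadraticPoly A + quadraticPoly B := by
  simp only [quadraticPoly, Pi.add_apply, C_add, add_mul, sum_add_distrib]

lemma eval_quadraticPoly (A : σ → σ → R) (a : σ → R) :
    eval a (quadraticPoly A) = ∑ i, ∑ j, A i j * a i * a j := by
  simp [quadraticPoly]

end Quadratic

variable {σ R : Type*} [CommSemiring R] [PartialOrder R] [IsOrderedRing R]

variable (σ R) in
def nonnegCoeffs : Subsemiring (MvPolynomial σ R) where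
  carrier := {P | ∀ d, 0 ≤ P.coeff d}
  mul_mem' {P Q} hP hQ d := by
    classical
    rw [coeff_mul]
    exact sum_nonneg fun x _ => mul_nonneg (hP _) (hQ _)
  one_mem' d := by
    classical
    rw [coeff_one]
    split_ifs <;> simp
  add_mem' hP hQ d := by
    rw [coeff_add]
    exact add_nonneg (hP d) (hQ d)
  zero_mem' d := by simp

variable {P Q S : MvPolynomial σ R}

lemma C_mem_nonnegCoeffs {a : R} (ha : 0 ≤ a) : C a ∈ nonnegCoeffs σ R := fun d => by
  classical
  rw [coeff_C]
  split_ifs <;> simp [ha]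

lemma X_mem_nonnegCoeffs (i : σ) : X i ∈ nonnegCoeffs σ R := fun d => by
  classical
  rw [coeff_X]
  split_ifs <;> simp

lemma quadraticPoly_mem_nonnegCoeffs [Fintype σ] {A : σ → σ → R} (hA : ∀ i j, 0 ≤ A i j) :
    quadraticPoly A ∈ nonnegCoeffs σ R :=
  sum_mem fun i _ => sum_mem fun j _ =>
    mul_mem (mul_mem (C_mem_nonnegCoeffs (hA i j)) (X_mem_nonnegCoeffs i)) (X_mem_nonnegCoeffs j)

lemma coeff_mul_coeff_le_coeff_mul (hP : P ∈ nonnegCoeffs σ R) (hQ : Q ∈ nonnegCoeffs σ R)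
    (d₁ d₂ : σ →₀ ℕ) : coeff d₁ P * coeff d₂ Q ≤ coeff (d₁ + d₂) (P * Q) := by
  classical
  have hmem : (d₁, d₂) ∈ antidiagonal (d₁ + d₂) := mem_antidiagonal.2 rfl
  rw [coeff_mul]
  exact single_le_sum (f := fun x => coeff x.1 P * coeff x.2 Q)
    (fun x _ => mul_nonneg (hP _) (hQ _)) hmem

lemma choose_mul_coeff_le_coeff_add_pow (hP : P ∈ nonnegCoeffs σ R) (hQ : Q ∈ nonnegCoeffs σ R)
    (s t : ℕ) (d : σ →₀ ℕ) :
    ((s + t).choose s : R) * coeff d (P ^ s * Q ^ t) ≤ coeff d ((P + Q) ^ (s + t)) := by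
  rw [add_pow, coeff_sum]
  refine le_trans (le_of_eq ?_)
    (single_le_sum (fun u _ => ?_) (mem_range.2 (by omega : s < s + t + 1)))
  · rw [Nat.add_sub_cancel_left, ← map_natCast C, mul_comm _ (C _), coeff_C_mul]
  · exact mul_mem (mul_mem (pow_mem hP _) (pow_mem hQ _)) (natCast_mem _ _) d

lemma choose_mul_coeff_mul_coeff_le (hP : P ∈ nonnegCoeffs σ R) (hQ : Q ∈ nonnegCoeffs σ R)
    (hS : S ∈ nonnegCoeffs σ R) (M₁ M₂ : ℕ) (d₁ d₂ : σ →₀ ℕ) :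
    ((M₁ + M₂).choose M₁ : R) * (coeff d₁ (P ^ M₁) * coeff d₂ (Q ^ M₂)) ≤
      coeff (d₁ + d₂) ((P + Q + S) ^ (M₁ + M₂)) :=
  calc ((M₁ + M₂).choose M₁ : R) * (coeff d₁ (P ^ M₁) * coeff d₂ (Q ^ M₂))
      ≤ ((M₁ + M₂).choose M₁ : R) * coeff (d₁ + d₂) (P ^ M₁ * Q ^ M₂) :=
        mul_le_mul_of_nonneg_left
          (coeff_mul_coeff_le_coeff_mul (pow_mem hP _) (pow_mem hQ _) d₁ d₂) (Nat.cast_nonneg _)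
    _ ≤ coeff (d₁ + d₂) ((P + Q) ^ (M₁ + M₂)) := choose_mul_coeff_le_coeff_add_pow hP hQ _ _ _
    _ ≤ coeff (d₁ + d₂) ((P + Q + S) ^ (M₁ + M₂)) := by
        simpa using choose_mul_coeff_le_coeff_add_pow (add_mem hP hQ) hS (M₁ + M₂) 0 (d₁ + d₂)

end MvPolynomial

section MemLpForall

variable {Ω : Type*} [MeasurableSpace Ω] {μ : Measure Ω}

lemma memLp_mul_of_forall_memLp {f g : Ω → ℝ} (hf : ∀ p, p ≠ ∞ → MemLp f p μ)
    (hg : ∀ p, p ≠ ∞ → MemLp g p μ) {p : ℝ≥0∞} (hp : p ≠ ∞) : MemLp (f * g) p μ := by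
  have : ENNReal.HolderTriple (2 * p) (2 * p) p := ⟨by
    rw [← two_mul, ENNReal.mul_inv (by simp) (by simp), ← mul_assoc,
      ENNReal.mul_inv_cancel (by simp) (by simp), one_mul]⟩
  have h2p : 2 * p ≠ ∞ := ENNReal.mul_ne_top ENNReal.ofNat_ne_top hp
  exact (hg _ h2p).mul (hf _ h2p)

lemma memLp_prod_pow_of_forall_memLp [IsFiniteMeasure μ] {ι : Type*} {X : ι → Ω → ℝ}
    (hX : ∀ i p, p ≠ ∞ → MemLp (X i) p μ) (s : Finset ι) (c : ι → ℕ) {p : ℝ≥0∞} (hp : p ≠ ∞) :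
    MemLp (fun ω => ∏ i ∈ s, X i ω ^ c i) p μ := by
  have hpow : ∀ i k, ∀ p, p ≠ ∞ → MemLp (X i ^ k) p μ := by
    intro i k
    induction k with
    | zero => intro p _; rw [pow_zero]; exact memLp_const 1
    | succ k ih => intro p hp; rw [pow_succ]; exact memLp_mul_of_forall_memLp ih (hX i) hp
  rw [← Finset.prod_fn]
  exact Finset.prod_induction _ (fun g => ∀ p, p ≠ ∞ → MemLp g p μ)
    (fun _ _ => memLp_mul_of_forall_memLp) (fun _ _ => memLp_const 1) (fun i _ => hpow i (c i)) p hp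

end MemLpForall

section GaussianFamily

variable {Ω ι : Type*} [MeasurableSpace Ω] {μ : Measure Ω} {X : ι → Ω → ℝ}

noncomputable def covMatrix (μ : Measure Ω) (X : ι → Ω → ℝ) : ι → ι → ℝ :=
  fun i j => ∫ ω, X i ω * X j ω ∂μ

lemma covMatrix_restrict (p : ι → Prop) [DecidablePred p] (i j : ι) :
    covMatrix μ (fun i ω => if p i then X i ω else 0) i j =
      if p i ∧ p j then covMatrix μ X i j else 0 := by
  simp only [covMatrix]
  split_ifs <;> simp_all

variable [Fintype ι]

def IsCenteredGaussianFamily (μ : Measure Ω) (X : ι → Ω → ℝ) : Prop :=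
  (∀ i, Measurable (X i)) ∧
    ∀ a : ι → ℝ, ∃ v : ℝ≥0, μ.map (fun ω => ∑ i, a i * X i ω) = gaussianReal 0 v

noncomputable def momentPoly [DecidableEq ι] (μ : Measure Ω) (X : ι → Ω → ℝ) (N : ℕ) :
    MvPolynomial ι ℝ :=
  ∑ c ∈ piAntidiag univ N, monomial (Finsupp.equivFunOnFinite.symm c)
    (Nat.multinomial univ c * ∫ ω, ∏ i, X i ω ^ c i ∂μ)

lemma coeff_momentPoly [DecidableEq ι] {N : ℕ} {c : ι → ℕ} (hc : ∑ i, c i = N) :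
    coeff (Finsupp.equivFunOnFinite.symm c) (momentPoly μ X N) =
      Nat.multinomial univ c * ∫ ω, ∏ i, X i ω ^ c i ∂μ := by
  rw [momentPoly, coeff_sum, sum_eq_single_of_mem c (mem_piAntidiag.2 ⟨hc, by simp⟩),
    coeff_monomial, if_pos rfl]
  intro c' _ hc'
  rw [coeff_monomial, if_neg (Finsupp.equivFunOnFinite.symm.injective.ne hc')]

namespace IsCenteredGaussianFamily

lemma memLp (hX : IsCenteredGaussianFamily μ X) (i : ι) {p : ℝ≥0∞} (hp : p ≠ ∞) :
    MemLp (X i) p μ := by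
  classical
  obtain ⟨v, hv⟩ := hX.2 (Pi.single i 1)
  simp only [Pi.single_apply, ite_mul, one_mul, zero_mul, sum_ite_eq', mem_univ, if_true] at hv
  have h := memLp_id_gaussianReal' (μ := 0) (v := v) p hp
  rwa [← hv, memLp_map_measure_iff aestronglyMeasurable_id (hX.1 i).aemeasurable] at h

lemma integrable_mul (hX : IsCenteredGaussianFamily μ X) (i j : ι) :
    Integrable (fun ω => X i ω * X j ω) μ :=
  (hX.memLp i (p := 2) ENNReal.ofNat_ne_top).integrable_mul
    (hX.memLp j (p := 2) ENNReal.ofNat_ne_top)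

lemma integrable_prod_pow [IsFiniteMeasure μ] (hX : IsCenteredGaussianFamily μ X) (c : ι → ℕ) :
    Integrable (fun ω => ∏ i, X i ω ^ c i) μ :=
  memLp_one_iff_integrable.1 <|
    memLp_prod_pow_of_forall_memLp (fun i _ hp => hX.memLp i hp) univ c ENNReal.one_ne_top

lemma integral_sum_mul_pow [DecidableEq ι] [IsFiniteMeasure μ] (hX : IsCenteredGaussianFamily μ X)
    (a : ι → ℝ) (N : ℕ) : ∫ ω, (∑ i, a i * X i ω) ^ N ∂μ = eval a (momentPoly μ X N) := by
  simp_rw [sum_pow_eq_sum_piAntidiag, mul_pow, prod_mul_distrib]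
  rw [integral_finsetSum _ fun c _ => ((hX.integrable_prod_pow c).const_mul _).const_mul _,
    momentPoly, map_sum]
  refine sum_congr rfl fun c _ => ?_
  rw [integral_const_mul, integral_const_mul, eval_monomial,
    Finsupp.prod_fintype _ _ (fun i => pow_zero (a i))]
  simp only [Finsupp.coe_equivFunOnFinite_symm]
  ring

lemma integral_sum_mul_sq (hX : IsCenteredGaussianFamily μ X) (a : ι → ℝ) :
    ∫ ω, (∑ i, a i * X i ω) ^ 2 ∂μ = eval a (quadraticPoly (covMatrix μ X)) := by
  have hexpand : ∀ ω, (∑ i, a i * X i ω) ^ 2 = ∑ i, ∑ j, a i * a j * (X i ω * X j ω) := by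
    intro ω
    rw [sq, sum_mul_sum]
    exact sum_congr rfl fun i _ => sum_congr rfl fun j _ => by ring
  simp_rw [hexpand]
  rw [integral_finsetSum _ fun i _ => integrable_finsetSum _ fun j _ =>
    (hX.integrable_mul i j).const_mul _, eval_quadraticPoly]
  refine sum_congr rfl fun i _ => ?_
  rw [integral_finsetSum _ fun j _ => (hX.integrable_mul i j).const_mul _]
  refine sum_congr rfl fun j _ => ?_
  rw [integral_const_mul, covMatrix]
  ring

lemma integral_sum_mul_pow_two_mul (hX : IsCenteredGaussianFamily μ X) (a : ι → ℝ) (M : ℕ) :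
    ∫ ω, (∑ i, a i * X i ω) ^ (2 * M) ∂μ =
      (2 * M - 1)‼ * eval a (quadraticPoly (covMatrix μ X)) ^ M := by
  obtain ⟨v, hv⟩ := hX.2 a
  have hY : Measurable fun ω => ∑ i, a i * X i ω :=
    Finset.measurable_sum _ fun i _ => (hX.1 i).const_mul (a i)
  have hmoment : ∀ M : ℕ,
      ∫ ω, (∑ i, a i * X i ω) ^ (2 * M) ∂μ = (2 * M - 1)‼ * (v : ℝ) ^ M := by
    intro M
    rw [← integral_pow_two_mul_gaussianReal, ← hv, integral_map hY.aemeasurable (by fun_prop)]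
  have hvar : (v : ℝ) = eval a (quadraticPoly (covMatrix μ X)) := by
    have h := hmoment 1
    simp only [mul_one, Nat.reduceSub, Nat.doubleFactorial, Nat.cast_one, one_mul, pow_one] at h
    rw [← h, hX.integral_sum_mul_sq]
  rw [hmoment, hvar]

lemma momentPoly_two_mul [DecidableEq ι] [IsFiniteMeasure μ] (hX : IsCenteredGaussianFamily μ X)
    (M : ℕ) : momentPoly μ X (2 * M) = C ((2 * M - 1)‼ : ℝ) * quadraticPoly (covMatrix μ X) ^ M :=
  MvPolynomial.funext fun a => by
    rw [← hX.integral_sum_mul_pow, hX.integral_sum_mul_pow_two_mul, eval_mul, eval_C, eval_pow]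

theorem integral_prod_pow_mul_two_pow_mul_factorial [IsFiniteMeasure μ]
    (hX : IsCenteredGaussianFamily μ X) {c : ι → ℕ} {M : ℕ} (hc : ∑ i, c i = 2 * M) :
    (∫ ω, ∏ i, X i ω ^ c i ∂μ) * (2 ^ M * M !) =
      (∏ i, (c i)! : ℝ) *
        coeff (Finsupp.equivFunOnFinite.symm c) (quadraticPoly (covMatrix μ X) ^ M) := by
  classical
  have h := coeff_momentPoly (μ := μ) (X := X) hc
  rw [hX.momentPoly_two_mul, coeff_C_mul] at h
  have hmult : (∏ i, (c i)! : ℝ) * Nat.multinomial univ c = (2 * M - 1)‼ * (2 ^ M * M !) := by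
    exact_mod_cast (by rw [Nat.multinomial_spec, hc, Nat.doubleFactorial_two_mul_sub_one_mul] :
      (∏ i, (c i)!) * Nat.multinomial univ c = (2 * M - 1)‼ * (2 ^ M * M !))
  have hpos : (0 : ℝ) < (2 * M - 1)‼ := by exact_mod_cast Nat.doubleFactorial_pos _
  apply mul_left_cancel₀ hpos.ne'
  linear_combination -(∏ i, (c i)! : ℝ) * h - (∫ ω, ∏ i, X i ω ^ c i ∂μ) * hmult

lemma restrict (hX : IsCenteredGaussianFamily μ X) (p : ι → Prop) [DecidablePred p] :
    IsCenteredGaussianFamily μ (fun i ω => if p i then X i ω else 0) := by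
  refine ⟨fun i => ?_, fun a => ?_⟩
  · by_cases h : p i
    · simpa [h] using hX.1 i
    · simp [h]
  · obtain ⟨v, hv⟩ := hX.2 fun i => if p i then a i else 0
    refine ⟨v, Eq.trans ?_ hv⟩
    congr 1
    ext ω
    refine sum_congr rfl fun i _ => ?_
    by_cases h : p i <;> simp [h]

end IsCenteredGaussianFamily

lemma choose_mul_coeff_covMatrix_restrict_le (hcov : ∀ i j, 0 ≤ covMatrix μ X i j)
    (p : ι → Prop) [DecidablePred p] (M₁ M₂ : ℕ) (d₁ d₂ : ι →₀ ℕ) :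
    ((M₁ + M₂).choose M₁ : ℝ) *
      (coeff d₁ (quadraticPoly (covMatrix μ fun i ω => if p i then X i ω else 0) ^ M₁) *
        coeff d₂ (quadraticPoly (covMatrix μ fun i ω => if ¬ p i then X i ω else 0) ^ M₂)) ≤
      coeff (d₁ + d₂) (quadraticPoly (covMatrix μ X) ^ (M₁ + M₂)) := by
  set A₁ := covMatrix μ fun i ω => if p i then X i ω else 0
  set A₂ := covMatrix μ fun i ω => if ¬ p i then X i ω else 0
  have hA₁ : ∀ i j, 0 ≤ A₁ i j := fun i j => by
    simp only [A₁, covMatrix_restrict]; split_ifs <;> simp [hcov]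
  have hA₂ : ∀ i j, 0 ≤ A₂ i j := fun i j => by
    simp only [A₂, covMatrix_restrict]; split_ifs <;> simp [hcov]
  have hcross : ∀ i j, 0 ≤ (covMatrix μ X - A₁ - A₂) i j := fun i j => by
    simp only [Pi.sub_apply, A₁, A₂, covMatrix_restrict]
    split_ifs <;> first | tauto | linarith [hcov i j]
  have hsplit : quadraticPoly (covMatrix μ X) =
      quadraticPoly A₁ + quadraticPoly A₂ + quadraticPoly (covMatrix μ X - A₁ - A₂) := by
    rw [← quadraticPoly_add, ← quadraticPoly_add]
    congr 1
    abel
  rw [hsplit]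
  exact choose_mul_coeff_mul_coeff_le (quadraticPoly_mem_nonnegCoeffs hA₁)
    (quadraticPoly_mem_nonnegCoeffs hA₂) (quadraticPoly_mem_nonnegCoeffs hcross) M₁ M₂ d₁ d₂

end GaussianFamily

lemma prod_factorial_add_of_disjoint {ι : Type*} [Fintype ι] {c₁ c₂ : ι → ℕ}
    (hdisj : ∀ i, c₁ i = 0 ∨ c₂ i = 0) :
    ∏ i, (c₁ i + c₂ i)! = (∏ i, (c₁ i)!) * ∏ i, (c₂ i)! := by
  rw [← prod_mul_distrib]
  refine prod_congr rfl fun i _ => ?_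
  rcases hdisj i with h | h <;> simp [h]

theorem IsCenteredGaussianFamily.integral_prod_pow_mul_integral_prod_pow_le
    {Ω ι : Type*} [MeasurableSpace Ω] {μ : Measure Ω} [IsFiniteMeasure μ] [Fintype ι]
    {X : ι → Ω → ℝ} (hX : IsCenteredGaussianFamily μ X) (hcov : ∀ i j, 0 ≤ covMatrix μ X i j)
    {c₁ c₂ : ι → ℕ} (hdisj : ∀ i, c₁ i = 0 ∨ c₂ i = 0) (he₁ : Even (∑ i, c₁ i))
    (he₂ : Even (∑ i, c₂ i)) :
    (∫ ω, ∏ i, X i ω ^ c₁ i ∂μ) * (∫ ω, ∏ i, X i ω ^ c₂ i ∂μ) ≤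
      ∫ ω, ∏ i, X i ω ^ (c₁ i + c₂ i) ∂μ := by
  classical
  obtain ⟨M₁, hM₁⟩ := he₁
  obtain ⟨M₂, hM₂⟩ := he₂
  rw [← two_mul] at hM₁ hM₂
  have hM : ∑ i, (c₁ i + c₂ i) = 2 * (M₁ + M₂) := by rw [sum_add_distrib, hM₁, hM₂, mul_add]
  set p : ι → Prop := fun i => c₂ i = 0
  have h₁ := (hX.restrict p).integral_prod_pow_mul_two_pow_mul_factorial hM₁
  have h₂ := (hX.restrict fun i => ¬ p i).integral_prod_pow_mul_two_pow_mul_factorial hM₂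
  have h := hX.integral_prod_pow_mul_two_pow_mul_factorial hM
  simp only [prod_ite_zero_pow _ p _ fun i hi => (hdisj i).resolve_right hi,
    prod_ite_zero_pow _ (fun i => ¬ p i) _ fun i hi => not_not.1 hi] at h₁ h₂
  have hd : Finsupp.equivFunOnFinite.symm (fun i => c₁ i + c₂ i) =
      Finsupp.equivFunOnFinite.symm c₁ + Finsupp.equivFunOnFinite.symm c₂ := by
    ext; simp
  have hfact : (∏ i, ((c₁ i + c₂ i)! : ℝ)) = (∏ i, ((c₁ i)! : ℝ)) * ∏ i, ((c₂ i)! : ℝ) := by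
    exact_mod_cast prod_factorial_add_of_disjoint hdisj
  rw [hd, hfact] at h
  have hK : (2 : ℝ) ^ (M₁ + M₂) * (M₁ + M₂)! =
      (M₁ + M₂).choose M₁ * ((2 ^ M₁ * M₁ !) * (2 ^ M₂ * M₂ !)) := by
    exact_mod_cast Nat.two_pow_add_mul_factorial_add M₁ M₂
  set k₁ := coeff (Finsupp.equivFunOnFinite.symm c₁)
    (quadraticPoly (covMatrix μ fun i ω => if p i then X i ω else 0) ^ M₁)
  set k₂ := coeff (Finsupp.equivFunOnFinite.symm c₂)
    (quadraticPoly (covMatrix μ fun i ω => if ¬ p i then X i ω else 0) ^ M₂)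
  set E₁ := ∫ ω, ∏ i, X i ω ^ c₁ i ∂μ
  set E₂ := ∫ ω, ∏ i, X i ω ^ c₂ i ∂μ
  refine le_of_mul_le_mul_right ?_ (by positivity : (0 : ℝ) < 2 ^ (M₁ + M₂) * (M₁ + M₂)!)
  calc E₁ * E₂ * (2 ^ (M₁ + M₂) * (M₁ + M₂)!)
      = ((∏ i, ((c₁ i)! : ℝ)) * ∏ i, ((c₂ i)! : ℝ)) * ((M₁ + M₂).choose M₁ * (k₁ * k₂)) := by
        rw [hK]
        linear_combination ((M₁ + M₂).choose M₁ * E₂ * (2 ^ M₂ * M₂ !)) * h₁ +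
          ((M₁ + M₂).choose M₁ * (∏ i, ((c₁ i)! : ℝ)) * k₁) * h₂
    _ ≤ ((∏ i, ((c₁ i)! : ℝ)) * ∏ i, ((c₂ i)! : ℝ)) * coeff (Finsupp.equivFunOnFinite.symm c₁ +
          Finsupp.equivFunOnFinite.symm c₂) (quadraticPoly (covMatrix μ X) ^ (M₁ + M₂)) :=
        mul_le_mul_of_nonneg_left (choose_mul_coeff_covMatrix_restrict_le hcov p M₁ M₂ _ _)
          (by positivity)
    _ = (∫ ω, ∏ i, X i ω ^ (c₁ i + c₂ i) ∂μ) * (2 ^ (M₁ + M₂) * (M₁ + M₂)!) := h.symm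

theorem stmt_2_general {Ω : Type*} [MeasureSpace Ω] [IsProbabilityMeasure (ℙ : Measure Ω)]
    {n : ℕ} (X : Fin n → Ω → ℝ) (hX : IsCenteredGaussianVec X)
    (hcov : ∀ i j, i ≠ j → 0 ≤ ∫ ω, X i ω * X j ω ∂ℙ)
    (m : Fin n → ℕ) (k : ℕ) :
    (∫ ω, ∏ j ∈ univ.filter (fun j : Fin n => (j : ℕ) < k), X j ω ^ (2 * m j) ∂ℙ) *
      (∫ ω, ∏ j ∈ univ.filter (fun j : Fin n => k ≤ (j : ℕ)), X j ω ^ (2 * m j) ∂ℙ) ≤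
    ∫ ω, ∏ j, X j ω ^ (2 * m j) ∂ℙ := by
  have hcov' : ∀ i j, 0 ≤ covMatrix ℙ X i j := fun i j => by
    rcases eq_or_ne i j with rfl | hij
    exacts [integral_nonneg fun ω => mul_self_nonneg _, hcov i j hij]
  set c₁ : Fin n → ℕ := fun j => if (j : ℕ) < k then 2 * m j else 0
  set c₂ : Fin n → ℕ := fun j => if k ≤ (j : ℕ) then 2 * m j else 0
  have hdisj : ∀ j, c₁ j = 0 ∨ c₂ j = 0 := fun j => by
    simp only [c₁, c₂]; split_ifs <;> omega
  have hc : ∀ j, c₁ j + c₂ j = 2 * m j := fun j => by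
    simp only [c₁, c₂]; split_ifs <;> omega
  have heven : ∀ q : Fin n → Prop, [DecidablePred q] → Even (∑ j, if q j then 2 * m j else 0) :=
    fun q _ => even_sum _ fun j _ => by split_ifs <;> simp
  have key := IsCenteredGaussianFamily.integral_prod_pow_mul_integral_prod_pow_le ⟨hX.1, hX.2.1⟩
    hcov' hdisj (heven _) (heven _)
  simpa only [hc, c₁, c₂, pow_ite, pow_zero, ← prod_filter] using key

theorem stmt_2 {Ω : Type*} [MeasureSpace Ω] [IsProbabilityMeasure (ℙ : Measure Ω)]
    {n : ℕ} (X : Fin n → Ω → ℝ) (hX : IsCenteredGaussianVec X)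
    (hcov : ∀ i j, i ≠ j → 0 ≤ ∫ ω, X i ω * X j ω ∂ℙ)
    (m : Fin n → ℕ) (hm : ∀ j, 1 ≤ m j)
    (k : ℕ) (hk1 : 1 ≤ k) (hk2 : k ≤ n - 1) :
    (∫ ω, ∏ j ∈ univ.filter (fun j : Fin n => (j : ℕ) < k), X j ω ^ (2 * m j) ∂ℙ) *
      (∫ ω, ∏ j ∈ univ.filter (fun j : Fin n => k ≤ (j : ℕ)), X j ω ^ (2 * m j) ∂ℙ) ≤
    ∫ ω, ∏ j, X j ω ^ (2 * m j) ∂ℙ :=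
  stmt_2_general X hX hcov m k
end

section
/- Let m_2, m_3 be positive integers. Then c_0^{m_2,m_3} > 0 and c_2^{m_2,m_3} > 0; moreover, if m_3 ≤ m_2 − 1 then c_1^{m_2,m_3} ≥ 0. -/
/-- `P k = (k+1/2)(k-1/2)⋯(3/2)(1/2) = (2k+1)!!/2^(k+1)`. -/
noncomputable def P (k : ℕ) : ℝ := ∏ i ∈ Finset.range (k + 1), ((i : ℝ) + 1 / 2)

/-- The combinatorial coefficient `c_p^{m₂,m₃}` from the paper. -/
noncomputable def c (m2 m3 p : ℕ) : ℝ :=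
  (∑ i ∈ Finset.Icc (p - m2) (min m2 p),
      ((2 : ℝ) ^ (2 * i) * P (m3 + i)
            / ((Nat.factorial (2 * i)) * (Nat.factorial (m2 - i)))
        - P (m3 - 1) / (2 * (Nat.factorial i) * (Nat.factorial (m2 - i)))) *
      ((2 : ℝ) ^ (2 * (p : ℤ) - 2 * (i : ℤ) - 1)
            * (2 * (m2 : ℝ) + 2 * (i : ℝ) - 2 * (p : ℝ) + 1) * P (m3 + p - i - 1)
            / ((Nat.factorial (2 * p - 2 * i)) * (Nat.factorial (m2 + i - p)))
        - P (m3 - 1) / (2 * (Nat.factorial (p - i)) * (Nat.factorial (m2 + i - p)))))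
  - ∑ i ∈ Finset.Ico (p - m2) (min m2 p),
      (2 : ℝ) ^ (2 * p) * P (m3 + i) * P (m3 + p - i - 1)
        / ((Nat.factorial (2 * i + 1)) * (Nat.factorial (2 * p - 2 * i - 1))
            * (Nat.factorial (m2 - i - 1)) * (Nat.factorial (m2 + i - p)))

/-!
For `p ≤ 2` both sums defining `c_p^{m₂,m₃}` have at most three terms. Writing `m₂ = a + 1`,
`m₃ = b + 1` and expressing every `P (b + j)` through `P b` by `P (k + 1) = (k + 3/2) P k`,
each `c_p` becomes the positive quantity `(a+1)(b+1) P(b)² / (a+1)!²` times a polynomial in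
`a, b`: namely `1`, `a - b - 1` and `(b+2)² + (a+1)(b² + 3b + 1) + (a+1)²(b+2)` for
`p = 0, 1, 2`.
-/

open Nat

lemma P_pos (k : ℕ) : 0 < P k :=
  Finset.prod_pos fun _ _ => by positivity

lemma P_add_one (k : ℕ) : P (k + 1) = P k * ((k : ℝ) + 3 / 2) := by
  rw [P, Finset.prod_range_succ, ← P]
  push_cast
  ring

noncomputable def cScale (a b : ℕ) : ℝ := (a + 1) * (b + 1) * P b ^ 2 / ((a + 1)! : ℝ) ^ 2

lemma cScale_pos (a b : ℕ) : 0 < cScale a b := by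
  have := P_pos b
  unfold cScale
  positivity

lemma c_zero_eq (a b : ℕ) : c (a + 1) (b + 1) 0 = cScale a b := by
  rw [c, cScale, show 0 - (a + 1) = 0 by omega, show min (a + 1) 0 = 0 by omega]
  simp only [Finset.Icc_self, Finset.sum_singleton, Finset.Ico_self, Finset.sum_empty, sub_zero]
  norm_num
  rw [P_add_one]
  field_simp
  ring

lemma c_one_eq (a b : ℕ) :
    c (a + 1) (b + 1) 1 = ((a : ℝ) - b - 1) * cScale a b := by
  rw [c, cScale, show 1 - (a + 1) = 0 by omega, show min (a + 1) 1 = 1 by omega,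
    show Finset.Icc 0 1 = {0, 1} from rfl, show Finset.Ico 0 1 = {0} from rfl,
    Finset.sum_pair (by norm_num), Finset.sum_singleton]
  norm_num
  rw [P_add_one (b + 1), P_add_one b, Nat.factorial_succ]
  push_cast
  field_simp
  ring

lemma c_two_eq (a b : ℕ) :
    c (a + 1) (b + 1) 2 = (((b : ℝ) + 2) ^ 2 + ((a : ℝ) + 1) * ((b : ℝ) ^ 2 + 3 * b + 1)
      + ((a : ℝ) + 1) ^ 2 * ((b : ℝ) + 2)) * cScale a b := by
  rw [c, cScale]
  rcases a with _ | t
  · rw [show 2 - (0 + 1) = 1 from rfl, show min (0 + 1) 2 = 1 from rfl,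
      Finset.Icc_self, Finset.sum_singleton, Finset.Ico_self, Finset.sum_empty, sub_zero]
    norm_num
    rw [show b + 2 = b + 1 + 1 from rfl, P_add_one (b + 1), P_add_one b]
    push_cast
    field_simp
    ring
  · rw [show 2 - (t + 1 + 1) = 0 by omega, show min (t + 1 + 1) 2 = 2 by omega,
      show Finset.Icc 0 2 = {0, 1, 2} from rfl, show Finset.Ico 0 2 = {0, 1} from rfl,
      Finset.sum_insert (by norm_num), Finset.sum_pair (by norm_num),
      Finset.sum_pair (by norm_num)]
    norm_num
    rw [show t + 1 + 1 - 2 = t from rfl, show t + 1 + 1 + 1 - 2 = t + 1 from rfl,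
      show b + 1 + 2 = b + 1 + 1 + 1 from rfl, show b + 2 = b + 1 + 1 from rfl,
      P_add_one (b + 1 + 1), P_add_one (b + 1), P_add_one b,
      Nat.factorial_succ (t + 1), Nat.factorial_succ t]
    push_cast
    field_simp
    ring

theorem stmt_5 (m2 m3 : ℕ) (hm2 : 1 ≤ m2) (hm3 : 1 ≤ m3) :
    0 < c m2 m3 0 ∧ 0 < c m2 m3 2 ∧ (m3 ≤ m2 - 1 → 0 ≤ c m2 m3 1) := by
  obtain ⟨a, rfl⟩ : ∃ a, m2 = a + 1 := ⟨m2 - 1, by omega⟩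
  obtain ⟨b, rfl⟩ : ∃ b, m3 = b + 1 := ⟨m3 - 1, by omega⟩
  have hscale := cScale_pos a b
  refine ⟨c_zero_eq a b ▸ hscale, c_two_eq a b ▸ by positivity, fun hba => ?_⟩
  have hab : (b : ℝ) + 1 ≤ a := by exact_mod_cast (by omega : b + 1 ≤ a)
  rw [c_one_eq]
  exact mul_nonneg (by linarith) hscale.le
end

section
/- Let m_2, m_3 be positive integers and set r = P(m_3−1). Then the following closed-form identities hold: c_0^{m_2,m_3} = r^2 m_3 / (m_2! (m_2−1)!); c_1^{m_2,m_3} = − r^2 m_3 (m_3 + 1 − m_2) / (m_2! (m_2−1)!); and c_2^{m_2,m_3} = r^2 m_3 (m_2 m_3^2 + m_3^2 + m_2^2 m_3 + m_2 m_3 + 2m_3 + m_2^2 + 1 − m_2) / (m_2! (m_2−1)!). -/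
lemma P1' (k : ℕ) : P (k+1) = P k * ((k:ℝ) + 3/2) := by
  simp only [P, Finset.prod_range_succ]
  push_cast; ring

lemma P2' (k : ℕ) : P (k+2) = P k * ((k:ℝ) + 3/2) * ((k:ℝ) + 5/2) := by
  simp only [P, Finset.prod_range_succ]
  push_cast; ring

lemma P3' (k : ℕ) : P (k+3) = P k * ((k:ℝ) + 3/2) * ((k:ℝ) + 5/2) * ((k:ℝ) + 7/2) := by
  simp only [P, Finset.prod_range_succ]
  push_cast; ring

lemma c0_eq (n k : ℕ) :
    c (n+1) (k+1) 0 = P k ^ 2 * (k+1) / (Nat.factorial (n+1) * Nat.factorial n) := by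
  have hn : ((Nat.factorial n : ℝ)) ≠ 0 := Nat.cast_ne_zero.mpr (Nat.factorial_ne_zero _)
  simp only [c]
  norm_num [P1', Nat.factorial_succ]
  field_simp
  ring

lemma c1_eq (n k : ℕ) :
    c (n+1) (k+1) 1 = -(P k ^ 2 * (k+1) * ((k:ℝ)+1+1-(n+1)))
      / (Nat.factorial (n+1) * Nat.factorial n) := by
  have hn : ((Nat.factorial n : ℝ)) ≠ 0 := Nat.cast_ne_zero.mpr (Nat.factorial_ne_zero _)
  simp only [c]
  rw [show (1:ℕ) - (n+1) = 0 from by omega, show min (n+1) 1 = 1 from by omega]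
  rw [Finset.sum_Icc_succ_top (by omega)]
  norm_num [P1', P2', Nat.factorial_succ]
  field_simp
  ring

lemma c2_one (k : ℕ) :
    c 1 (k+1) 2 = P k ^ 2 * ((k:ℝ)+1) *
        ((1:ℝ) * ((k:ℝ)+1) ^ 2 + ((k:ℝ)+1) ^ 2 + 1 * ((k:ℝ)+1) + 1 * ((k:ℝ)+1)
          + 2 * ((k:ℝ)+1) + 1 + 1 - 1)
        / (Nat.factorial 1 * Nat.factorial 0) := by
  simp only [c]
  norm_num [P1', P2', Nat.factorial_succ]
  ring

set_option maxHeartbeats 4000000 in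
lemma c2_big (m k : ℕ) :
    c (m+2) (k+1) 2 = P k ^ 2 * ((k:ℝ)+1) *
        (((m:ℝ)+2) * ((k:ℝ)+1) ^ 2 + ((k:ℝ)+1) ^ 2 + ((m:ℝ)+2) ^ 2 * ((k:ℝ)+1)
          + ((m:ℝ)+2) * ((k:ℝ)+1) + 2 * ((k:ℝ)+1) + ((m:ℝ)+2) ^ 2 + 1 - ((m:ℝ)+2))
        / (Nat.factorial (m+2) * Nat.factorial (m+1)) := by
  have hm : ((Nat.factorial m : ℝ)) ≠ 0 := Nat.cast_ne_zero.mpr (Nat.factorial_ne_zero _)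
  simp only [c]
  rw [show (2:ℕ) - (m+2) = 0 from by omega, show min (m+2) 2 = 2 from by omega]
  rw [Finset.sum_Icc_succ_top (by omega), Finset.sum_Icc_succ_top (by omega),
    Finset.sum_Ico_succ_top (by omega)]
  norm_num [P1', P2', P3', Nat.factorial_succ]
  simp only [show m+2+1-2 = m+1 from by omega, Nat.factorial_succ]
  push_cast
  field_simp
  ring

theorem stmt_8 (m2 m3 : ℕ) (hm2 : 1 ≤ m2) (hm3 : 1 ≤ m3) :
    c m2 m3 0 = P (m3 - 1) ^ 2 * m3 / (Nat.factorial m2 * Nat.factorial (m2 - 1)) ∧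
    c m2 m3 1 = -(P (m3 - 1) ^ 2 * m3 * ((m3 : ℝ) + 1 - m2))
        / (Nat.factorial m2 * Nat.factorial (m2 - 1)) ∧
    c m2 m3 2 = P (m3 - 1) ^ 2 * m3 *
        ((m2 : ℝ) * m3 ^ 2 + m3 ^ 2 + m2 ^ 2 * m3 + m2 * m3 + 2 * m3 + m2 ^ 2 + 1 - m2)
        / (Nat.factorial m2 * Nat.factorial (m2 - 1)) := by
  obtain ⟨n, rfl⟩ : ∃ n, m2 = n + 1 := ⟨m2 - 1, by omega⟩
  obtain ⟨k, rfl⟩ : ∃ k, m3 = k + 1 := ⟨m3 - 1, by omega⟩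
  simp only [Nat.add_sub_cancel]
  refine ⟨?_, ?_, ?_⟩
  · rw [c0_eq]; push_cast; ring
  · rw [c1_eq]; push_cast; ring
  · rcases n with _ | m
    · rw [show (0:ℕ)+1 = 1 from rfl, c2_one]; push_cast; norm_num
    · rw [show m+1+1 = m+2 from rfl, c2_big]; push_cast; ring
end
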